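/- arXiv:1208.1532 — 6 statements merged into one kernel-verified Lean document; each statement's English description precedes it below -/
import Mathlib

section
/- The number of permutations of length n avoiding the pattern 231 equals the n-th Catalan number. -/
/-- `π` contains the pattern 231: indices `i < j < k` with `π k < π i < π j`. -/
def Contains231 {n : ℕ} (π : Equiv.Perm (Fin n)) : Prop :=
  ∃ i j k : Fin n, i < j ∧ j < k ∧ π k < π i ∧ π i < π j

open Equiv Finset

def glueFun {n : ℕ} (m : Fin (n+1)) (σ : Perm (Fin m)) (τ : Perm (Fin (n - m)))
    (i : Fin (n+1)) : Fin (n+1) :=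
  if h : (i : ℕ) < m then
    ⟨σ ⟨i, h⟩, by have := (σ ⟨i, h⟩).isLt; have := m.isLt; omega⟩
  else if h2 : (i : ℕ) = m then Fin.last n
  else
    ⟨(m : ℕ) + τ ⟨(i : ℕ) - ((m : ℕ) + 1), by have := i.isLt; omega⟩, by
      have := (τ ⟨(i : ℕ) - ((m : ℕ) + 1), by have := i.isLt; omega⟩).isLt; omega⟩

lemma glueFun_lt {n : ℕ} (m : Fin (n+1)) (σ : Perm (Fin m)) (τ : Perm (Fin (n - m)))
    (i : Fin (n+1)) (h : (i : ℕ) < m) :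
    (glueFun m σ τ i : ℕ) = σ ⟨i, h⟩ := by
  simp only [glueFun, dif_pos h]

lemma glueFun_eq {n : ℕ} (m : Fin (n+1)) (σ : Perm (Fin m)) (τ : Perm (Fin (n - m)))
    (i : Fin (n+1)) (h : (i : ℕ) = m) :
    (glueFun m σ τ i : ℕ) = n := by
  simp only [glueFun, dif_neg (by omega : ¬ (i : ℕ) < m), dif_pos h, Fin.val_last]

lemma glueFun_gt {n : ℕ} (m : Fin (n+1)) (σ : Perm (Fin m)) (τ : Perm (Fin (n - m)))
    (i : Fin (n+1)) (h : (m : ℕ) < i) (h' : (i : ℕ) - ((m : ℕ) + 1) < n - m) :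
    (glueFun m σ τ i : ℕ) = (m : ℕ) + τ ⟨(i : ℕ) - ((m : ℕ) + 1), h'⟩ := by
  simp only [glueFun, dif_neg (by omega : ¬ (i : ℕ) < m), dif_neg (by omega : ¬ (i : ℕ) = (m:ℕ))]

lemma sub_lt_aux {n : ℕ} (m : Fin (n+1)) (i : Fin (n+1)) (h : (m : ℕ) < i) :
    (i : ℕ) - ((m : ℕ) + 1) < n - m := by have := i.isLt; omega

lemma glueFun_injective {n : ℕ} (m : Fin (n+1)) (σ : Perm (Fin m)) (τ : Perm (Fin (n - m))) :
    Function.Injective (glueFun m σ τ) := by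
  intro i j hij
  have hval : (glueFun m σ τ i : ℕ) = (glueFun m σ τ j : ℕ) := by rw [hij]
  have him := m.isLt
  rcases lt_trichotomy (i : ℕ) (m : ℕ) with hi | hi | hi <;>
    rcases lt_trichotomy (j : ℕ) (m : ℕ) with hj | hj | hj
  · -- both lt
    rw [glueFun_lt m σ τ i hi, glueFun_lt m σ τ j hj] at hval
    have : σ ⟨i, hi⟩ = σ ⟨j, hj⟩ := Fin.ext hval
    have h2 := congrArg Fin.val (σ.injective this)
    exact Fin.ext h2
  · rw [glueFun_lt m σ τ i hi, glueFun_eq m σ τ j hj] at hval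
    have := (σ ⟨i, hi⟩).isLt; omega
  · rw [glueFun_lt m σ τ i hi, glueFun_gt m σ τ j hj (sub_lt_aux m j hj)] at hval
    have := (σ ⟨i, hi⟩).isLt; omega
  · rw [glueFun_eq m σ τ i hi, glueFun_lt m σ τ j hj] at hval
    have := (σ ⟨j, hj⟩).isLt; omega
  · exact Fin.ext (hi.trans hj.symm)
  · rw [glueFun_eq m σ τ i hi, glueFun_gt m σ τ j hj (sub_lt_aux m j hj)] at hval
    have := (τ ⟨(j : ℕ) - ((m : ℕ) + 1), sub_lt_aux m j hj⟩).isLt; omega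
  · rw [glueFun_gt m σ τ i hi (sub_lt_aux m i hi), glueFun_lt m σ τ j hj] at hval
    have := (σ ⟨j, hj⟩).isLt; omega
  · rw [glueFun_gt m σ τ i hi (sub_lt_aux m i hi), glueFun_eq m σ τ j hj] at hval
    have := (τ ⟨(i : ℕ) - ((m : ℕ) + 1), sub_lt_aux m i hi⟩).isLt; omega
  · rw [glueFun_gt m σ τ i hi (sub_lt_aux m i hi), glueFun_gt m σ τ j hj (sub_lt_aux m j hj)] at hval
    have : τ ⟨(i : ℕ) - ((m : ℕ) + 1), _⟩ = τ ⟨(j : ℕ) - ((m : ℕ) + 1), _⟩ :=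
      Fin.ext (by omega)
    have := congrArg Fin.val (τ.injective this)
    simp only at this
    exact Fin.ext (by omega)

noncomputable def gluePerm {n : ℕ} (m : Fin (n+1)) (σ : Perm (Fin m)) (τ : Perm (Fin (n - m))) :
    Perm (Fin (n+1)) :=
  Equiv.ofBijective _ (Finite.injective_iff_bijective.mp (glueFun_injective m σ τ))

lemma gluePerm_apply {n : ℕ} (m : Fin (n+1)) (σ : Perm (Fin m)) (τ : Perm (Fin (n - m)))
    (i : Fin (n+1)) : gluePerm m σ τ i = glueFun m σ τ i := rfl

lemma gluePerm_avoids {n : ℕ} (m : Fin (n+1)) (σ : Perm (Fin m)) (τ : Perm (Fin (n - m)))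
    (hσ : ¬ Contains231 σ) (hτ : ¬ Contains231 τ) : ¬ Contains231 (gluePerm m σ τ) := by
  rintro ⟨i, j, k, hij, hjk, hki, hij2⟩
  rw [Fin.lt_def] at hij hjk hki hij2
  simp only [gluePerm_apply] at hki hij2
  have him := m.isLt
  rcases lt_trichotomy (i : ℕ) (m : ℕ) with hi | hi | hi
  · -- i in left block; value < m forces k in left block, hence j too
    rw [glueFun_lt m σ τ i hi] at hki hij2
    have hσi := (σ ⟨i, hi⟩).isLt
    have hk : (k : ℕ) < m := by
      rcases lt_trichotomy (k : ℕ) (m : ℕ) with h | h | h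
      · exact h
      · rw [glueFun_eq m σ τ k h] at hki; omega
      · rw [glueFun_gt m σ τ k h (sub_lt_aux m k h)] at hki; omega
    have hj : (j : ℕ) < m := by omega
    rw [glueFun_lt m σ τ k hk] at hki
    rw [glueFun_lt m σ τ j hj] at hij2
    exact hσ ⟨⟨i, hi⟩, ⟨j, hj⟩, ⟨k, hk⟩, by rw [Fin.lt_def]; exact hij,
      by rw [Fin.lt_def]; exact hjk, by rw [Fin.lt_def]; exact hki,
      by rw [Fin.lt_def]; exact hij2⟩
  · -- i at the max: impossible since glue i < glue j
    rw [glueFun_eq m σ τ i hi] at hij2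
    have := (glueFun m σ τ j).isLt; omega
  · -- i in right block, so j, k also
    have hj : (m : ℕ) < j := by omega
    have hk : (m : ℕ) < k := by omega
    rw [glueFun_gt m σ τ i hi (sub_lt_aux m i hi)] at hki hij2
    rw [glueFun_gt m σ τ k hk (sub_lt_aux m k hk)] at hki
    rw [glueFun_gt m σ τ j hj (sub_lt_aux m j hj)] at hij2
    exact hτ ⟨⟨(i:ℕ) - ((m:ℕ)+1), sub_lt_aux m i hi⟩, ⟨(j:ℕ) - ((m:ℕ)+1), sub_lt_aux m j hj⟩,
      ⟨(k:ℕ) - ((m:ℕ)+1), sub_lt_aux m k hk⟩,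
      by rw [Fin.lt_def]; simp only; omega, by rw [Fin.lt_def]; simp only; omega,
      by rw [Fin.lt_def]; omega, by rw [Fin.lt_def]; omega⟩

section Decompose
variable {n : ℕ} (π : Perm (Fin (n+1)))

/-- Positions before the max hold values smaller than the position of the max. -/
lemma key_lt (hπ : ¬ Contains231 π) (i : Fin (n+1))
    (hi : (i : ℕ) < (π.symm (Fin.last n) : ℕ)) : (π i : ℕ) < (π.symm (Fin.last n) : ℕ) := by
  set p := π.symm (Fin.last n) with hp
  by_contra h
  push_neg at h
  have hπp : π p = Fin.last n := π.apply_symm_apply _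
  have hπin : (π i : ℕ) < n := by
    have : π i ≠ Fin.last n := by
      intro he
      have : i = p := by rw [hp, ← he, Equiv.symm_apply_apply]
      omega
    have h1 := (π i).isLt
    have h2 : (π i : ℕ) ≠ n := fun hv => this (Fin.ext (by simp [hv]))
    omega
  -- find k > p with π k < π i
  have hex : ∃ k : Fin (n+1), (p : ℕ) < (k : ℕ) ∧ (π k : ℕ) < (π i : ℕ) := by
    by_contra hno
    push_neg at hno
    -- π.symm maps Iio (π i) injectively into (Iio p).erase i
    have hsub : ∀ v ∈ Finset.Iio (π i), π.symm v ∈ (Finset.Iio p).erase i := by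
      intro v hv
      rw [Finset.mem_Iio] at hv
      rw [Finset.mem_erase, Finset.mem_Iio]
      have hvlt : (v : ℕ) < (π i : ℕ) := hv
      have h1 : ¬ ((p : ℕ) < (π.symm v : ℕ)) := by
        intro hgt
        have := hno (π.symm v) hgt
        rw [π.apply_symm_apply] at this
        omega
      have h2 : π.symm v ≠ p := by
        intro he
        have : v = Fin.last n := by rw [← hπp, ← he, π.apply_symm_apply]
        simp [this, Fin.val_last] at hvlt
        omega
      constructor
      · intro he
        have hvi : v = π i := by rw [← he, π.apply_symm_apply]
        rw [hvi] at hvlt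
        omega
      · rw [Fin.lt_def]
        rcases lt_trichotomy ((π.symm v : ℕ)) ((p : ℕ)) with h | h | h
        · exact h
        · exact absurd (Fin.ext h) h2
        · exact absurd h h1
    have hcard := Finset.card_le_card_of_injOn (fun v => π.symm v) hsub
      (fun a _ b _ hab => π.symm.injective hab)
    rw [Fin.card_Iio, Finset.card_erase_of_mem (by rw [Finset.mem_Iio, Fin.lt_def]; exact hi),
      Fin.card_Iio] at hcard
    omega
  obtain ⟨k, hk1, hk2⟩ := hex
  exact hπ ⟨i, p, k, by rw [Fin.lt_def]; exact hi, by rw [Fin.lt_def]; exact hk1,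
    by rw [Fin.lt_def]; exact hk2, by rw [Fin.lt_def, hπp, Fin.val_last]; exact hπin⟩

end Decompose

section Decompose2
variable {n : ℕ} (π : Perm (Fin (n+1)))

lemma val_lt_n (i : Fin (n+1)) (hi : (i : ℕ) ≠ (π.symm (Fin.last n) : ℕ)) :
    (π i : ℕ) < n := by
  have h1 := (π i).isLt
  have h2 : π i ≠ Fin.last n := by
    intro he
    exact hi (by rw [← he, Equiv.symm_apply_apply])
  have : (π i : ℕ) ≠ n := fun hv => h2 (Fin.ext (by simp [hv]))
  omega

lemma key_ge (hπ : ¬ Contains231 π) (i : Fin (n+1))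
    (hi : (π.symm (Fin.last n) : ℕ) < (i : ℕ)) :
    (π.symm (Fin.last n) : ℕ) ≤ (π i : ℕ) := by
  set p := π.symm (Fin.last n) with hp
  by_contra h
  push_neg at h
  -- the image of Iio p under π is exactly Iio p
  have hsub : (Finset.Iio p).image π ⊆ Finset.Iio p := by
    intro v hv
    rw [Finset.mem_image] at hv
    obtain ⟨j, hj, rfl⟩ := hv
    rw [Finset.mem_Iio] at hj ⊢
    rw [Fin.lt_def] at hj ⊢
    exact key_lt π hπ j hj
  have hcard : (Finset.Iio p).card ≤ ((Finset.Iio p).image π).card := by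
    rw [Finset.card_image_of_injective _ π.injective]
  have heq := Finset.eq_of_subset_of_card_le hsub hcard
  have hmem : π i ∈ Finset.Iio p := by rw [Finset.mem_Iio, Fin.lt_def]; exact h
  rw [← heq, Finset.mem_image] at hmem
  obtain ⟨j, hj, hje⟩ := hmem
  rw [Finset.mem_Iio, Fin.lt_def] at hj
  have := π.injective hje
  omega

end Decompose2

section Decompose3
variable {n : ℕ} (π : Perm (Fin (n+1)))

/-- the `y`-th position after `p`. -/
def posAfter (p : Fin (n+1)) (y : Fin (n - (p : ℕ))) : Fin (n+1) :=
  ⟨(p : ℕ) + 1 + (y : ℕ), by have := y.isLt; have := p.isLt; omega⟩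

lemma posAfter_val (p : Fin (n+1)) (y : Fin (n - (p : ℕ))) :
    (posAfter p y : ℕ) = (p : ℕ) + 1 + (y : ℕ) := rfl

lemma sub_bound (hπ : ¬ Contains231 π) (i : Fin (n+1))
    (hi : (π.symm (Fin.last n) : ℕ) < (i : ℕ)) :
    (π i : ℕ) - (π.symm (Fin.last n) : ℕ) < n - (π.symm (Fin.last n) : ℕ) := by
  have h1 := key_ge π hπ i hi
  have h2 := val_lt_n π i (by omega)
  omega

noncomputable def leftPerm (hπ : ¬ Contains231 π) :
    Perm (Fin (π.symm (Fin.last n) : ℕ)) :=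
  Equiv.ofBijective
    (fun x => ⟨(π ⟨(x : ℕ), lt_trans x.isLt (π.symm (Fin.last n)).isLt⟩ : ℕ),
      key_lt π hπ _ x.isLt⟩)
    (Finite.injective_iff_bijective.mp (by
      intro a b hab
      have h1 := congrArg Fin.val hab
      simp only at h1
      have h2 := π.injective (Fin.ext h1)
      have h3 := congrArg Fin.val h2
      simp only at h3
      exact Fin.ext h3))

lemma leftPerm_val (hπ : ¬ Contains231 π) (x : Fin (π.symm (Fin.last n) : ℕ)) :
    (leftPerm π hπ x : ℕ)
      = (π ⟨(x : ℕ), lt_trans x.isLt (π.symm (Fin.last n)).isLt⟩ : ℕ) := rfl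

noncomputable def rightPerm (hπ : ¬ Contains231 π) :
    Perm (Fin (n - (π.symm (Fin.last n) : ℕ))) :=
  Equiv.ofBijective
    (fun y => ⟨(π (posAfter (π.symm (Fin.last n)) y) : ℕ) - (π.symm (Fin.last n) : ℕ),
      sub_bound π hπ _ (by have := posAfter_val (π.symm (Fin.last n)) y; omega)⟩)
    (Finite.injective_iff_bijective.mp (by
      intro a b hab
      have h1 := congrArg Fin.val hab
      simp only at h1
      have hva := posAfter_val (π.symm (Fin.last n)) a
      have hvb := posAfter_val (π.symm (Fin.last n)) b
      have ha := key_ge π hπ (posAfter (π.symm (Fin.last n)) a) (by omega)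
      have hb := key_ge π hπ (posAfter (π.symm (Fin.last n)) b) (by omega)
      have h2 := π.injective (Fin.ext (show
        (π (posAfter (π.symm (Fin.last n)) a) : ℕ)
          = (π (posAfter (π.symm (Fin.last n)) b) : ℕ) by omega))
      have h3 := congrArg Fin.val h2
      rw [posAfter_val, posAfter_val] at h3
      exact Fin.ext (by omega)))

lemma rightPerm_val (hπ : ¬ Contains231 π) (y : Fin (n - (π.symm (Fin.last n) : ℕ))) :
    (rightPerm π hπ y : ℕ)
      = (π (posAfter (π.symm (Fin.last n)) y) : ℕ) - (π.symm (Fin.last n) : ℕ) := rfl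

lemma leftPerm_avoids (hπ : ¬ Contains231 π) : ¬ Contains231 (leftPerm π hπ) := by
  rintro ⟨i, j, k, hij, hjk, hki, hij2⟩
  rw [Fin.lt_def] at hij hjk hki hij2
  rw [leftPerm_val, leftPerm_val] at hki hij2
  refine hπ ⟨⟨(i : ℕ), lt_trans i.isLt (π.symm (Fin.last n)).isLt⟩,
    ⟨(j : ℕ), lt_trans j.isLt (π.symm (Fin.last n)).isLt⟩,
    ⟨(k : ℕ), lt_trans k.isLt (π.symm (Fin.last n)).isLt⟩, ?_, ?_, ?_, ?_⟩ <;>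
    rw [Fin.lt_def]
  · exact hij
  · exact hjk
  · exact hki
  · exact hij2

lemma rightPerm_avoids (hπ : ¬ Contains231 π) : ¬ Contains231 (rightPerm π hπ) := by
  rintro ⟨i, j, k, hij, hjk, hki, hij2⟩
  rw [Fin.lt_def] at hij hjk hki hij2
  rw [rightPerm_val, rightPerm_val] at hki hij2
  have hvi := posAfter_val (π.symm (Fin.last n)) i
  have hvj := posAfter_val (π.symm (Fin.last n)) j
  have hvk := posAfter_val (π.symm (Fin.last n)) k
  have hi' := key_ge π hπ (posAfter (π.symm (Fin.last n)) i) (by omega)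
  have hj' := key_ge π hπ (posAfter (π.symm (Fin.last n)) j) (by omega)
  have hk' := key_ge π hπ (posAfter (π.symm (Fin.last n)) k) (by omega)
  refine hπ ⟨posAfter (π.symm (Fin.last n)) i, posAfter (π.symm (Fin.last n)) j,
    posAfter (π.symm (Fin.last n)) k, ?_, ?_, ?_, ?_⟩ <;> rw [Fin.lt_def] <;> omega

lemma glue_decomposition (hπ : ¬ Contains231 π) :
    gluePerm (π.symm (Fin.last n)) (leftPerm π hπ) (rightPerm π hπ) = π := by
  apply Equiv.ext
  intro i
  apply Fin.ext
  rw [gluePerm_apply]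
  rcases lt_trichotomy (i : ℕ) ((π.symm (Fin.last n)) : ℕ) with hi | hi | hi
  · rw [glueFun_lt _ _ _ i hi, leftPerm_val]
  · rw [glueFun_eq _ _ _ i hi]
    have : i = π.symm (Fin.last n) := Fin.ext hi
    rw [this, π.apply_symm_apply, Fin.val_last]
  · rw [glueFun_gt _ _ _ i hi (sub_lt_aux (π.symm (Fin.last n)) i hi), rightPerm_val]
    have harg : posAfter (π.symm (Fin.last n))
        ⟨(i : ℕ) - (((π.symm (Fin.last n)) : ℕ) + 1), sub_lt_aux (π.symm (Fin.last n)) i hi⟩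
          = i := Fin.ext (by
            rw [posAfter_val]
            show ((π.symm (Fin.last n) : ℕ)) + 1 + ((i : ℕ) - (((π.symm (Fin.last n)) : ℕ) + 1))
              = (i : ℕ)
            omega)
    rw [harg]
    have := key_ge π hπ i hi
    omega

end Decompose3

lemma card_step (n : ℕ) :
    Nat.card {π : Perm (Fin (n+1)) // ¬ Contains231 π} =
      ∑ m : Fin (n+1), Nat.card {σ : Perm (Fin (m : ℕ)) // ¬ Contains231 σ} *
        Nat.card {τ : Perm (Fin (n - (m : ℕ))) // ¬ Contains231 τ} := by
  classical
  set G : (Σ m : Fin (n+1), {σ : Perm (Fin (m : ℕ)) // ¬ Contains231 σ} ×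
      {τ : Perm (Fin (n - (m : ℕ))) // ¬ Contains231 τ}) →
      {π : Perm (Fin (n+1)) // ¬ Contains231 π} :=
    fun x => ⟨gluePerm x.1 x.2.1.1 x.2.2.1, gluePerm_avoids x.1 x.2.1.1 x.2.2.1 x.2.1.2 x.2.2.2⟩
    with hG
  have hGbij : Function.Bijective G := by
    constructor
    · rintro ⟨m, ⟨σ, hσ⟩, ⟨τ, hτ⟩⟩ ⟨m', ⟨σ', hσ'⟩, ⟨τ', hτ'⟩⟩ h
      simp only [hG, Subtype.mk.injEq] at h
      have hmval := m.isLt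
      have hmval' := m'.isLt
      have hmm : m = m' := by
        have h1 : (gluePerm m σ τ m : ℕ) = (gluePerm m' σ' τ' m : ℕ) := by rw [h]
        rw [gluePerm_apply, gluePerm_apply, glueFun_eq m σ τ m rfl] at h1
        by_contra hne
        have hne' : (m : ℕ) ≠ (m' : ℕ) := fun hv => hne (Fin.ext hv)
        rcases lt_or_gt_of_ne hne' with hlt | hgt
        · rw [glueFun_lt m' σ' τ' m hlt] at h1
          have := (σ' ⟨(m : ℕ), hlt⟩).isLt; omega
        · rw [glueFun_gt m' σ' τ' m hgt (sub_lt_aux m' m hgt)] at h1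
          have := (τ' ⟨(m : ℕ) - ((m' : ℕ) + 1), sub_lt_aux m' m hgt⟩).isLt; omega
      subst hmm
      have hσσ : σ = σ' := by
        apply Equiv.ext
        intro x
        have hx : ((⟨(x : ℕ), lt_trans x.isLt m.isLt⟩ : Fin (n+1)) : ℕ) < (m : ℕ) := x.isLt
        have h1 : (gluePerm m σ τ ⟨(x : ℕ), lt_trans x.isLt m.isLt⟩ : ℕ)
            = (gluePerm m σ' τ' ⟨(x : ℕ), lt_trans x.isLt m.isLt⟩ : ℕ) := by rw [h]
        rw [gluePerm_apply, gluePerm_apply, glueFun_lt m σ τ _ hx, glueFun_lt m σ' τ' _ hx] at h1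
        exact Fin.ext h1
      have hττ : τ = τ' := by
        apply Equiv.ext
        intro y
        have hy : (m : ℕ) < ((posAfter m y : Fin (n+1)) : ℕ) := by
          rw [posAfter_val]; omega
        have h1 : (gluePerm m σ τ (posAfter m y) : ℕ)
            = (gluePerm m σ' τ' (posAfter m y) : ℕ) := by rw [h]
        rw [gluePerm_apply, gluePerm_apply, glueFun_gt m σ τ _ hy (sub_lt_aux m _ hy),
          glueFun_gt m σ' τ' _ hy (sub_lt_aux m _ hy)] at h1
        have harg : (⟨((posAfter m y : Fin (n+1)) : ℕ) - ((m : ℕ) + 1),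
            sub_lt_aux m _ hy⟩ : Fin (n - (m : ℕ))) = y := by
          apply Fin.ext
          show ((posAfter m y : Fin (n+1)) : ℕ) - ((m : ℕ) + 1) = (y : ℕ)
          rw [posAfter_val]; omega
        rw [harg] at h1
        exact Fin.ext (by omega)
      subst hσσ; subst hττ
      rfl
    · rintro ⟨π, hπ⟩
      refine ⟨⟨π.symm (Fin.last n), ⟨leftPerm π hπ, leftPerm_avoids π hπ⟩,
        ⟨rightPerm π hπ, rightPerm_avoids π hπ⟩⟩, ?_⟩
      simp only [hG]
      exact Subtype.ext (glue_decomposition π hπ)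
  rw [← Nat.card_eq_of_bijective G hGbij, Nat.card_eq_fintype_card, Fintype.card_sigma]
  refine Finset.sum_congr rfl fun m _ => ?_
  rw [Fintype.card_prod, Nat.card_eq_fintype_card, Nat.card_eq_fintype_card]

/-- The number of permutations of length `n` avoiding the pattern 231 is the
`n`-th Catalan number. -/
theorem card_avoid231_eq_catalan (n : ℕ) :
    Nat.card {π : Equiv.Perm (Fin n) // ¬ Contains231 π} = catalan n := by
  induction n using Nat.strong_induction_on with
  | _ n ih =>
    match n with
    | 0 =>
      rw [catalan_zero]
      have h1 : ∀ π : Perm (Fin 0), ¬ Contains231 π := by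
        rintro π ⟨i, -⟩; exact i.elim0
      haveI : Subsingleton (Perm (Fin 0)) := ⟨fun a b => Equiv.ext fun i => i.elim0⟩
      haveI : Subsingleton {π : Perm (Fin 0) // ¬ Contains231 π} :=
        ⟨fun a b => Subtype.ext (Subsingleton.elim _ _)⟩
      have h2 : Nonempty {π : Perm (Fin 0) // ¬ Contains231 π} := ⟨⟨1, h1 1⟩⟩
      exact Nat.card_unique
    | (k + 1) =>
      rw [card_step k, catalan_succ]
      refine Finset.sum_congr rfl fun m _ => ?_
      rw [ih (m : ℕ) (by have := m.isLt; omega), ih (k - (m : ℕ)) (by have := m.isLt; omega)]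
end

section
/- A permutation of length n is sortable on a single stack if and only if it avoids the pattern 231. -/
/-- State of a single-stack switchyard: output so far, the stack, remaining input. -/
structure SState where
  output : List ℕ
  stack : List ℕ
  input : List ℕ

/-- One step of single-stack sorting: push the next input element onto the stack,
or pop the top of the stack to the output. -/
inductive StackStep : SState → SState → Prop
  | push (o s i : List ℕ) (x : ℕ) : StackStep ⟨o, s, x :: i⟩ ⟨o, x :: s, i⟩
  | pop (o s i : List ℕ) (x : ℕ) : StackStep ⟨o, x :: s, i⟩ ⟨o ++ [x], s, i⟩

/-- A permutation (as a list) is sortable on a single stack if some sequence of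
operations outputs `1, 2, …, n`. -/
def StackSortable (l : List ℕ) : Prop :=
  Relation.ReflTransGen StackStep ⟨[], [], l⟩ ⟨List.range' 1 l.length, [], []⟩

/-- `l` contains the pattern 231: indices `i < j < k` with `l k < l i < l j`. -/
def Contains231L (l : List ℕ) : Prop :=
  ∃ i j k : Fin l.length, i < j ∧ j < k ∧ l.get k < l.get i ∧ l.get i < l.get j

/-!
If `a, b, c` occur in this order in the input, then in every run either `a` is output before `c`,
or `b` is output before `a`: if `a` is still on the stack when `c` is pushed, then `b` lies above
it. With `c < a < b` neither order is sorted, so a sortable list avoids 231.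

Conversely, write a 231-avoiding list as `A ++ M :: B` with `M` the first occurrence of its
maximum. Avoidance gives `A ≤ B` elementwise, so sorting `A`, pushing `M`, sorting `B` on top of
it and popping `M` outputs a sorted list.
-/

open List

local infix:50 " ⟶* " => Relation.ReflTransGen StackStep

theorem contains231L_iff {l : List ℕ} :
    Contains231L l ↔ ∃ a b c, [a, b, c] <+ l ∧ c < a ∧ a < b := by
  constructor
  · rintro ⟨i, j, k, hij, hjk, hki, hij'⟩
    refine ⟨l[i], l[j], l[k], ?_, hki, hij'⟩
    simpa using map_getElem_sublist (is := [i, j, k]) (by simp [hij, hjk, hij.trans hjk])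
  · rintro ⟨a, b, c, h, hca, hab⟩
    obtain ⟨f, hf⟩ := sublist_iff_exists_fin_orderEmbedding_get_eq.1 h
    have ha : a = l.get (f 0) := hf 0
    have hb : b = l.get (f 1) := hf 1
    have hc : c = l.get (f 2) := hf 2
    exact ⟨f 0, f 1, f 2, f.strictMono (Fin.lt_def.2 (by simp)),
      f.strictMono (Fin.lt_def.2 (by simp)), ha ▸ hc ▸ hca, ha ▸ hb ▸ hab⟩

theorem Contains231L.of_sublist {l₁ l₂ : List ℕ} (h : l₁ <+ l₂) (h₁ : Contains231L l₁) :
    Contains231L l₂ := by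
  obtain ⟨a, b, c, habc, hca, hab⟩ := contains231L_iff.1 h₁
  exact contains231L_iff.2 ⟨a, b, c, habc.trans h, hca, hab⟩

theorem le_of_not_contains231L_append_cons {A B : List ℕ} {M : ℕ}
    (hl : ¬ Contains231L (A ++ M :: B)) (hA : ∀ x ∈ A, x < M) {x y : ℕ} (hx : x ∈ A)
    (hy : y ∈ B) : x ≤ y := by
  by_contra! hyx
  have hsub : [x, M, y] <+ A ++ M :: B :=
    (singleton_sublist.2 hx).append ((singleton_sublist.2 hy).cons_cons M)
  exact hl (contains231L_iff.2 ⟨x, M, y, hsub, hyx, hA x hx⟩)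

def SState.frame (o₀ s₀ i₀ : List ℕ) (st : SState) : SState :=
  ⟨o₀ ++ st.output, st.stack ++ s₀, st.input ++ i₀⟩

namespace StackStep

theorem frame (o₀ s₀ i₀ : List ℕ) {st st' : SState} (h : StackStep st st') :
    StackStep (st.frame o₀ s₀ i₀) (st'.frame o₀ s₀ i₀) := by
  cases h with
  | push o s i x => exact push _ _ _ x
  | pop o s i x => simpa [SState.frame] using pop (o₀ ++ o) (s ++ s₀) (i ++ i₀) x

theorem run_frame (o₀ s₀ i₀ : List ℕ) {st st' : SState} (h : st ⟶* st') :
    st.frame o₀ s₀ i₀ ⟶* st'.frame o₀ s₀ i₀ :=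
  h.lift (SState.frame o₀ s₀ i₀) (fun _ _ ↦ frame o₀ s₀ i₀) _ _

theorem exists_output_eq_append_perm {st : SState} {fo : List ℕ} (h : st ⟶* ⟨fo, [], []⟩) :
    ∃ r, fo = st.output ++ r ∧ r ~ st.stack ++ st.input := by
  induction h using Relation.ReflTransGen.head_induction_on with
  | refl => exact ⟨[], by simp, by simp⟩
  | head step _ ih =>
    obtain ⟨r, hfo, hr⟩ := ih
    cases step with
    | push o s i x => exact ⟨r, hfo, hr.trans perm_middle.symm⟩
    | pop o s i x => exact ⟨x :: r, by simpa using hfo, hr.cons x⟩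

theorem output_perm_input {l fo : List ℕ} (h : ⟨[], [], l⟩ ⟶* ⟨fo, [], []⟩) : fo ~ l := by
  obtain ⟨r, rfl, hr⟩ := exists_output_eq_append_perm h
  simpa using hr

theorem pair_sublist_output_of_popped {o s i fo : List ℕ} {x y : ℕ}
    (h : ⟨o ++ [x], s, i⟩ ⟶* ⟨fo, [], []⟩) (hy : y ∈ s ++ i) : [x, y] <+ fo := by
  obtain ⟨r, rfl, hr⟩ := exists_output_eq_append_perm h
  have hxy : [x, y] <+ x :: r := (singleton_sublist.2 (hr.mem_iff.2 hy)).cons_cons x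
  simpa using hxy.trans (sublist_append_right o _)

theorem pair_sublist_output_of_stack {st : SState} {fo : List ℕ} (h : st ⟶* ⟨fo, [], []⟩)
    {a b : ℕ} (hba : [b, a] <+ st.stack) : [b, a] <+ fo := by
  induction h using Relation.ReflTransGen.head_induction_on with
  | refl => simp at hba
  | head step hrest ih =>
    cases step with
    | push o s i x => exact ih (hba.cons x)
    | pop o s i x =>
      cases hba with
      | cons _ hba => exact ih hba
      | cons_cons _ ha =>
        exact pair_sublist_output_of_popped hrest (mem_append_left _ (singleton_sublist.1 ha))

theorem sublist_output_of_mem_stack {st : SState} {fo : List ℕ} (h : st ⟶* ⟨fo, [], []⟩)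
    {a b c : ℕ} (ha : a ∈ st.stack) (hbc : [b, c] <+ st.input) :
    [a, c] <+ fo ∨ [b, a] <+ fo := by
  induction h using Relation.ReflTransGen.head_induction_on with
  | refl => simp at hbc
  | head step hrest ih =>
    cases step with
    | push o s i x =>
      cases hbc with
      | cons _ hbc => exact ih (mem_cons_of_mem x ha) hbc
      | cons_cons _ _ => exact .inr (pair_sublist_output_of_stack hrest (by simpa using ha))
    | pop o s i x =>
      rcases mem_cons.1 ha with rfl | ha
      · have hc : c ∈ i := hbc.subset (by simp : c ∈ [b, c])
        exact .inl (pair_sublist_output_of_popped hrest (mem_append_right _ hc))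
      · exact ih ha hbc

theorem sublist_output_of_sublist_input {st : SState} {fo : List ℕ} (h : st ⟶* ⟨fo, [], []⟩)
    {a b c : ℕ} (habc : [a, b, c] <+ st.input) : [a, c] <+ fo ∨ [b, a] <+ fo := by
  induction h using Relation.ReflTransGen.head_induction_on with
  | refl => simp at habc
  | head step hrest ih =>
    cases step with
    | push o s i x =>
      cases habc with
      | cons _ habc => exact ih habc
      | cons_cons _ hbc => exact sublist_output_of_mem_stack hrest mem_cons_self hbc
    | pop o s i x => exact ih habc

end StackStep

theorem StackSortable.not_contains231L {l : List ℕ} (hl : StackSortable l) :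
    ¬ Contains231L l := by
  rw [contains231L_iff]
  rintro ⟨a, b, c, habc, hca, hab⟩
  have hsorted : (range' 1 l.length).Pairwise (· < ·) := pairwise_lt_range'
  rcases StackStep.sublist_output_of_sublist_input hl habc with hac | hba
  · exact (pairwise_pair.1 (hsorted.sublist hac)).asymm hca
  · exact (pairwise_pair.1 (hsorted.sublist hba)).asymm hab

theorem exists_sorted_run_of_not_contains231L (l : List ℕ) (hl : ¬ Contains231L l) :
    ∃ fo, fo.Pairwise (· ≤ ·) ∧ ⟨[], [], l⟩ ⟶* ⟨fo, [], []⟩ := by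
  rcases eq_or_ne l [] with rfl | hne
  · exact ⟨[], .nil, .refl⟩
  obtain ⟨M, hM, hmax⟩ : ∃ M ∈ l, ∀ x ∈ l, x ≤ M :=
    ⟨l.max hne, max_mem hne, fun _ hx ↦ le_max_of_mem hx⟩
  obtain ⟨A, B, rfl, hMA⟩ := eq_append_cons_of_mem hM
  have hA : ∀ x ∈ A, x < M := fun x hx ↦
    (hmax x (mem_append_left _ hx)).lt_of_ne (by rintro rfl; exact hMA hx)
  obtain ⟨fA, hfA, hrunA⟩ := exists_sorted_run_of_not_contains231L A
    (fun hc ↦ hl (hc.of_sublist (sublist_append_left _ _)))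
  obtain ⟨fB, hfB, hrunB⟩ := exists_sorted_run_of_not_contains231L B
    (fun hc ↦ hl (hc.of_sublist ((sublist_cons_self M B).trans (sublist_append_right _ _))))
  have hpA := StackStep.output_perm_input hrunA
  have hpB := StackStep.output_perm_input hrunB
  refine ⟨fA ++ fB ++ [M], ?_, ?_⟩
  · have hle : ∀ a ∈ fA ++ fB, a ≤ M := fun a ha ↦
      hmax a (((sublist_cons_self M B).append_left A).subset ((hpA.append hpB).subset ha))
    refine pairwise_append.2 ⟨pairwise_append.2 ⟨hfA, hfB, fun a ha b hb ↦ ?_⟩,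
      pairwise_singleton _ _, by simpa using hle⟩
    exact le_of_not_contains231L_append_cons hl hA (hpA.subset ha) (hpB.subset hb)
  · calc ⟨[], [], A ++ M :: B⟩ ⟶* ⟨fA, [], M :: B⟩ := by
          simpa [SState.frame] using StackStep.run_frame [] [] (M :: B) hrunA
      _ ⟶* ⟨fA, [M], B⟩ := .single (.push _ _ _ _)
      _ ⟶* ⟨fA ++ fB, [M], []⟩ := by
          simpa [SState.frame] using StackStep.run_frame fA [M] [] hrunB
      _ ⟶* ⟨fA ++ fB ++ [M], [], []⟩ := .single (.pop _ _ _ _)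
termination_by l.length
decreasing_by all_goals subst_vars; simp +arith

theorem stackSortable_of_not_contains231L {n : ℕ} {l : List ℕ} (hperm : l ~ range' 1 n)
    (hl : ¬ Contains231L l) : StackSortable l := by
  obtain ⟨fo, hfo, hrun⟩ := exists_sorted_run_of_not_contains231L l hl
  have hfo_eq : fo = range' 1 l.length := by
    rw [hperm.length_eq, length_range']
    exact ((StackStep.output_perm_input hrun).trans hperm).eq_of_pairwise' hfo pairwise_le_range'
  rwa [StackSortable, ← hfo_eq]

/-- A permutation of length `n` is sortable on a single stack iff it avoids 231. -/
theorem stackSortable_iff_avoids231 (n : ℕ) (l : List ℕ) (hl : l.Perm (List.range' 1 n)) :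
    StackSortable l ↔ ¬ Contains231L l :=
  ⟨StackSortable.not_contains231L, stackSortable_of_not_contains231L hl⟩
end

section
/- The permutation 52341 is not sortable on a deque. -/
/-- State of a deque switchyard: output so far, the deque, remaining input. -/
structure DState where
  output : List ℕ
  deque : List ℕ
  input : List ℕ

/-- One step of deque sorting: push the next input element to either end of the
deque, or pop either end element of the deque to the output. -/
inductive DequeStep : DState → DState → Prop
  | pushLeft (o d i : List ℕ) (x : ℕ) : DequeStep ⟨o, d, x :: i⟩ ⟨o, x :: d, i⟩
  | pushRight (o d i : List ℕ) (x : ℕ) : DequeStep ⟨o, d, x :: i⟩ ⟨o, d ++ [x], i⟩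
  | popLeft (o d i : List ℕ) (x : ℕ) : DequeStep ⟨o, x :: d, i⟩ ⟨o ++ [x], d, i⟩
  | popRight (o d i : List ℕ) (x : ℕ) : DequeStep ⟨o, d ++ [x], i⟩ ⟨o ++ [x], d, i⟩

/-- A permutation (as a list) is deque-sortable if some run outputs `1, 2, …, n`. -/
def DequeSortable (l : List ℕ) : Prop :=
  Relation.ReflTransGen DequeStep ⟨[], [], l⟩ ⟨List.range' 1 l.length, [], []⟩

/-!
Call a state doomed if no run from it reaches empty deque and input with increasing output.
A state is doomed as soon as an output element exceeds an element still in the deque or input,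
and as soon as the deque holds an element with larger elements on both sides, since one of
those must be popped first. Reading `5 2 3 4 1`, popping anything before `1` arrives is fatal,
so `5, 2, 3, 4` are all pushed. Each of `2, 3, 4` lands on one side of `5`; two of them land
on the same side, and the earlier, smaller one is then trapped between the later one and `5`.
-/

open List

theorem List.concat_sublist_concat' {α : Type*} {a b : α} {l₁ l₂ : List α} :
    l₁ ++ [a] <+ l₂ ++ [b] ↔ l₁ ++ [a] <+ l₂ ∨ a = b ∧ l₁ <+ l₂ := by
  have h := cons_sublist_cons' (a := a) (b := b) (l₁ := l₁.reverse) (l₂ := l₂.reverse)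
  simpa only [← reverse_concat, reverse_sublist] using h

def DState.SortedTerminal (s : DState) : Prop :=
  s.deque = [] ∧ s.input = [] ∧ s.output.Pairwise (· < ·)

def DState.Doomed (s : DState) : Prop :=
  ∀ t, Relation.ReflTransGen DequeStep s t → ¬ t.SortedTerminal

theorem DState.Doomed.of_invariant {P : DState → Prop}
    (step : ∀ s t, P s → DequeStep s t → P t ∨ t.Doomed)
    (not_sorted : ∀ s, P s → ¬ s.SortedTerminal)
    {s : DState} (hs : P s) : s.Doomed := by
  intro t hst
  induction hst using Relation.ReflTransGen.head_induction_on with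
  | refl => exact not_sorted _ hs
  | head hsu hut ih => exact (step _ _ hs hsu).elim ih (· _ hut)

theorem doomed_of_inversion {a b : ℕ} (hab : a < b) {s : DState} (hs : [b, a] <+ s.output) :
    s.Doomed := by
  refine DState.Doomed.of_invariant (P := fun s => [b, a] <+ s.output) ?_ ?_ hs
  · rintro s t h (_ | _ | _ | _)
    all_goals first | exact Or.inl h | exact Or.inl (h.trans (sublist_append_left _ _))
  · rintro s h ⟨-, -, hsorted⟩
    exact lt_asymm hab (pairwise_pair.1 (hsorted.sublist h))

theorem doomed_of_mem_output {a b : ℕ} (hab : a < b) {s : DState} (hb : b ∈ s.output)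
    (ha : a ∈ s.deque ∨ a ∈ s.input) : s.Doomed := by
  refine DState.Doomed.of_invariant
    (P := fun s => b ∈ s.output ∧ (a ∈ s.deque ∨ a ∈ s.input)) ?_ ?_ ⟨hb, ha⟩
  · have pop_a : ∀ {o d i}, b ∈ o → DState.Doomed ⟨o ++ [a], d, i⟩ := fun hb =>
      doomed_of_inversion hab ((singleton_sublist.2 hb).append (Sublist.refl [a]))
    rintro s t ⟨hb, ha⟩ (⟨o, d, i, x⟩ | ⟨o, d, i, x⟩ | ⟨o, d, i, x⟩ | ⟨o, d, i, x⟩)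
    · left; simp_all; tauto
    · left; simp_all; tauto
    all_goals
      by_cases hx : a = x
      · subst hx; exact Or.inr (pop_a hb)
      · left; simp_all
  · rintro s ⟨-, ha⟩ ⟨hd, hi, -⟩
    simp [hd, hi] at ha

theorem doomed_of_shielded {a b c : ℕ} (hab : a < b) (hac : a < c) {s : DState}
    (hs : [b, a, c] <+ s.deque) : s.Doomed := by
  refine DState.Doomed.of_invariant (P := fun s => [b, a, c] <+ s.deque) ?_ ?_ hs
  · rintro s t h (⟨o, d, i, x⟩ | ⟨o, d, i, x⟩ | ⟨o, d, i, x⟩ | ⟨o, d, i, x⟩)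
    · exact Or.inl (h.cons x)
    · exact Or.inl (sublist_append_of_sublist_left h)
    · obtain h | ⟨rfl, htail⟩ := cons_sublist_cons'.1 h
      · exact Or.inl h
      · exact Or.inr (doomed_of_mem_output hab (by simp) (Or.inl (htail.subset mem_cons_self)))
    · obtain h | ⟨rfl, htail⟩ := (concat_sublist_concat' (l₁ := [b, a])).1 h
      · exact Or.inl h
      · exact Or.inr (doomed_of_mem_output hac (by simp) (Or.inl (htail.subset (by simp))))
  · rintro s h ⟨hd, -, -⟩
    simp [hd] at h

theorem DequeStep.sublist_deque_or_doomed {a : ℕ} {l : List ℕ} (hl : ∀ b ∈ l, a < b)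
    {s t : DState} (hst : DequeStep s t) (hs : l <+ s.deque) (ha : a ∈ t.input) :
    l <+ t.deque ∨ t.Doomed := by
  cases hst with
  | pushLeft o d i x => exact Or.inl (hs.cons x)
  | pushRight o d i x => exact Or.inl (sublist_append_of_sublist_left hs)
  | popLeft o d i x =>
    obtain h | hx := sublist_or_mem_of_sublist (l₁ := []) hs
    · exact Or.inl h
    · exact Or.inr (doomed_of_mem_output (hl x hx) (by simp) (Or.inr ha))
  | popRight o d i x =>
    obtain h | hx := sublist_or_mem_of_sublist (l₂ := []) hs
    · exact Or.inl (by simpa using h)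
    · exact Or.inr (doomed_of_mem_output (hl x hx) (by simp) (Or.inr ha))

theorem DequeStep.input_sublist_or_push {p : ℕ} {l : List ℕ} {s t : DState}
    (hst : DequeStep s t) (hs : p :: l <+ s.input) :
    p :: l <+ t.input ∨ l <+ t.input ∧ (t.deque = p :: s.deque ∨ t.deque = s.deque ++ [p]) := by
  cases hst with
  | pushLeft o d i x =>
    obtain h | ⟨rfl, h⟩ := cons_sublist_cons'.1 hs
    exacts [Or.inl h, Or.inr ⟨h, Or.inl rfl⟩]
  | pushRight o d i x =>
    obtain h | ⟨rfl, h⟩ := cons_sublist_cons'.1 hs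
    exacts [Or.inl h, Or.inr ⟨h, Or.inr rfl⟩]
  | popLeft | popRight => exact Or.inl hs

theorem doomed_of_separated {a u v m z : ℕ} (ha : a < min u v) (hz : max u v < min z m)
    {s : DState} (hd : [u, m, v] <+ s.deque) (hi : [z, a] <+ s.input) : s.Doomed := by
  refine DState.Doomed.of_invariant
    (P := fun s => [u, m, v] <+ s.deque ∧ [z, a] <+ s.input) ?_ ?_ ⟨hd, hi⟩
  · rintro s t ⟨hd, hi⟩ hst
    obtain hi' | ⟨-, hpush | hpush⟩ := hst.input_sublist_or_push hi
    · obtain hd' | hdoom :=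
        hst.sublist_deque_or_doomed (a := a) (by simp; omega) hd (hi'.subset (by simp))
      exacts [Or.inl ⟨hd', hi'⟩, Or.inr hdoom]
    · have hd' := ((sublist_append_left [u, m] [v]).trans hd).cons_cons z
      rw [← hpush] at hd'
      exact Or.inr (doomed_of_shielded (by omega) (by omega) hd')
    · have hd' := ((sublist_append_right [u] [m, v]).trans hd).append (Sublist.refl [z])
      rw [← hpush] at hd'
      exact Or.inr (doomed_of_shielded (by omega) (by omega) hd')
  · rintro s ⟨-, hi⟩ ⟨-, hi0, -⟩
    simp [hi0] at hi

theorem doomed_of_pair_deque {a x y z m : ℕ} (hax : a < x) (hxy : x < y) (hyz : y < z) (hym : y < m)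
    {s : DState} (hd : [x, m] <+ s.deque ∨ [m, x] <+ s.deque) (hi : [y, z, a] <+ s.input) :
    s.Doomed := by
  refine DState.Doomed.of_invariant
    (P := fun s => ([x, m] <+ s.deque ∨ [m, x] <+ s.deque) ∧ [y, z, a] <+ s.input) ?_ ?_ ⟨hd, hi⟩
  · rintro s t ⟨hd, hi⟩ hst
    obtain hi' | ⟨hi', hpush | hpush⟩ := hst.input_sublist_or_push hi
    · have ha : a ∈ t.input := hi'.subset (by simp)
      rcases hd with hd | hd <;>
        obtain hd' | hdoom := hst.sublist_deque_or_doomed (a := a) (by simp; omega) hd ha <;>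
        tauto
    · right
      rcases hd with hd | hd <;> have hd' := hd.cons_cons y <;> rw [← hpush] at hd'
      · exact doomed_of_shielded hxy (by omega) hd'
      · exact doomed_of_separated (by omega) (by omega) hd' hi'
    · right
      rcases hd with hd | hd <;> have hd' := hd.append (Sublist.refl [y]) <;> rw [← hpush] at hd'
      · exact doomed_of_separated (by omega) (by omega) hd' hi'
      · exact doomed_of_shielded (by omega) hxy hd'
  · rintro s ⟨-, hi⟩ ⟨-, hi0, -⟩
    simp [hi0] at hi

theorem doomed_of_mem_deque {a x y z m : ℕ} (hax : a < x) (hxy : x < y) (hyz : y < z) (hym : y < m)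
    {s : DState} (hd : m ∈ s.deque) (hi : [x, y, z, a] <+ s.input) : s.Doomed := by
  refine DState.Doomed.of_invariant (P := fun s => [m] <+ s.deque ∧ [x, y, z, a] <+ s.input) ?_ ?_
    ⟨singleton_sublist.2 hd, hi⟩
  · rintro s t ⟨hd, hi⟩ hst
    obtain hi' | ⟨hi', hpush | hpush⟩ := hst.input_sublist_or_push hi
    · obtain hd' | hdoom := hst.sublist_deque_or_doomed (a := a) (by simp; omega) hd
        (hi'.subset (by simp))
      exacts [Or.inl ⟨hd', hi'⟩, Or.inr hdoom]
    · have hd' := hd.cons_cons x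
      rw [← hpush] at hd'
      exact Or.inr (doomed_of_pair_deque hax hxy hyz hym (Or.inl hd') hi')
    · have hd' := hd.append (Sublist.refl [x])
      rw [← hpush] at hd'
      exact Or.inr (doomed_of_pair_deque hax hxy hyz hym (Or.inr hd') hi')
  · rintro s ⟨-, hi⟩ ⟨-, hi0, -⟩
    simp [hi0] at hi

theorem doomed_of_sublist_input {a x y z m : ℕ} (hax : a < x) (hxy : x < y) (hyz : y < z)
    (hym : y < m) {s : DState} (hs : [m, x, y, z, a] <+ s.input) : s.Doomed := by
  refine DState.Doomed.of_invariant (P := fun s => [m, x, y, z, a] <+ s.input) ?_ ?_ hs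
  · rintro s t hi hst
    obtain hi' | ⟨hi', hpush | hpush⟩ := hst.input_sublist_or_push hi
    · exact Or.inl hi'
    all_goals exact Or.inr (doomed_of_mem_deque hax hxy hyz hym (by simp [hpush]) hi')
  · rintro s hi ⟨-, hi0, -⟩
    simp [hi0] at hi

theorem not_dequeSortable_of_sublist {l : List ℕ} {a x y z m : ℕ} (hl : [m, x, y, z, a] <+ l)
    (hax : a < x) (hxy : x < y) (hyz : y < z) (hym : y < m) : ¬ DequeSortable l := fun h =>
  doomed_of_sublist_input (s := ⟨[], [], l⟩) hax hxy hyz hym hl _ h ⟨rfl, rfl, pairwise_lt_range'⟩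

/-- The permutation 52341 is not sortable on a deque. -/
theorem not_dequeSortable_52341 : ¬ DequeSortable [5, 2, 3, 4, 1] :=
  not_dequeSortable_of_sublist (Sublist.refl _) (by norm_num) (by norm_num) (by norm_num)
    (by norm_num)
end

section
/- Every permutation sortable on a deque can be sorted by a reduced run: a run in which, whenever an end element of the deque equals the next element required by the output, the very next operation pops that element to the output. -/
/-- A run (a list of successive states) is reduced if, whenever an end element of the
deque is the next element required by the output, the very next state has that
element popped to the output. -/
def IsReducedRun (r : List DState) : Prop :=
  ∀ (i : ℕ) (h : i + 1 < r.length) (x : ℕ),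
    ((r.get ⟨i, by omega⟩).deque.head? = some x ∨
      (r.get ⟨i, by omega⟩).deque.getLast? = some x) →
    x = (r.get ⟨i, by omega⟩).output.length + 1 →
    (r.get ⟨i + 1, h⟩).output = (r.get ⟨i, by omega⟩).output ++ [x]

open Relation

namespace DState

def contents (s : DState) : List ℕ := s.output ++ s.deque ++ s.input

def weight (s : DState) : ℕ := s.deque.length + 2 * s.input.length

def sorted (N : ℕ) : DState := ⟨List.range' 1 N, [], []⟩

end DState

def ReducedStep (s t : DState) : Prop :=
  DequeStep s t ∧ ∀ x, (s.deque.head? = some x ∨ s.deque.getLast? = some x) →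
    x = s.output.length + 1 → t.output = s.output ++ [x]

theorem List.eq_range'_of_append_singleton_eq_range' {o : List ℕ} {z : ℕ}
    (h : o ++ [z] = List.range' 1 (o ++ [z]).length) :
    o = List.range' 1 o.length ∧ z = o.length + 1 := by
  rw [List.length_append, List.length_singleton, List.range'_concat] at h
  obtain ⟨ho, hz⟩ := List.append_inj' h rfl
  exact ⟨ho, by simpa [Nat.add_comm] using hz⟩

namespace DequeStep

variable {s t : DState}

theorem contents_perm (h : DequeStep s t) : s.contents.Perm t.contents := by
  cases h <;> simp [DState.contents, List.perm_iff_count, List.count_append, List.count_cons] <;>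
    intro y <;> split <;> omega

theorem weight_lt (h : DequeStep s t) : t.weight < s.weight := by
  cases h <;> simp [DState.weight] <;> omega

theorem input_eq_of_output_eq_append {x : ℕ} (h : DequeStep s t)
    (ho : t.output = s.output ++ [x]) :
    t.input = s.input ∧ (s.deque = x :: t.deque ∨ s.deque = t.deque ++ [x]) := by
  cases h <;> simp_all

theorem exists_pop_pushLeft {o d i : List ℕ} {x y : ℕ} (h : DequeStep ⟨o, y :: d, i⟩ t)
    (ho : t.output = o ++ [x]) (hy : y ≠ x) :
    ∃ u, DequeStep ⟨o, d, y :: i⟩ u ∧ u.output = o ++ [x] ∧ DequeStep u t := by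
  obtain ⟨o', d', i'⟩ := t
  obtain ⟨rfl, hd | hd⟩ := h.input_eq_of_output_eq_append ho
  · exact absurd (List.cons.inj hd).1 hy
  · obtain rfl : o' = o ++ [x] := ho
    rcases List.cons_eq_append_iff.1 hd with ⟨-, hyx⟩ | ⟨e, rfl, rfl⟩
    · exact absurd (List.cons.inj hyx).1.symm hy
    · exact ⟨_, .popRight o e (y :: i') x, rfl, .pushLeft _ _ _ _⟩

theorem exists_pop_pushRight {o d i : List ℕ} {x y : ℕ} (h : DequeStep ⟨o, d ++ [y], i⟩ t)
    (ho : t.output = o ++ [x]) (hy : y ≠ x) :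
    ∃ u, DequeStep ⟨o, d, y :: i⟩ u ∧ u.output = o ++ [x] ∧ DequeStep u t := by
  obtain ⟨o', d', i'⟩ := t
  obtain ⟨rfl, hd | hd⟩ := h.input_eq_of_output_eq_append ho
  · obtain rfl : o' = o ++ [x] := ho
    rcases List.append_eq_cons_iff.1 hd with ⟨-, hyx⟩ | ⟨e, rfl, rfl⟩
    · exact absurd (List.cons.inj hyx).1 hy
    · exact ⟨_, .popLeft o e (y :: i') x, rfl, .pushRight _ _ _ _⟩
  · exact absurd (List.append_inj' hd rfl).2 (by simpa using hy)

end DequeStep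

section Sortable

variable {N : ℕ} {s t : DState}

theorem nodup_contents_of_reaches (h : ReflTransGen DequeStep s (DState.sorted N)) :
    s.contents.Nodup := by
  suffices s.contents.Perm (List.range' 1 N) from this.nodup_iff.2 List.nodup_range'
  induction h using ReflTransGen.head_induction_on with
  | refl => simp [DState.contents, DState.sorted]
  | head hst _ ih => exact hst.contents_perm.trans ih

theorem output_eq_range'_of_reaches (h : ReflTransGen DequeStep s (DState.sorted N)) :
    s.output = List.range' 1 s.output.length := by
  induction h using ReflTransGen.head_induction_on with
  | refl => simp [DState.sorted]
  | head hst _ ih =>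
    cases hst with
    | pushLeft | pushRight => exact ih
    | popLeft | popRight => exact (List.eq_range'_of_append_singleton_eq_range' ih).1

theorem eq_next_of_output_eq_append {x : ℕ} (ht : ReflTransGen DequeStep t (DState.sorted N))
    (ho : t.output = s.output ++ [x]) : x = s.output.length + 1 := by
  have := output_eq_range'_of_reaches ht
  rw [ho] at this
  exact (List.eq_range'_of_append_singleton_eq_range' this).2

theorem exists_pop_of_next_mem_deque (h : ReflTransGen DequeStep s (DState.sorted N))
    (hx : s.output.length + 1 ∈ s.deque) :
    ∃ t, DequeStep s t ∧ t.output = s.output ++ [s.output.length + 1] ∧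
      ReflTransGen DequeStep t (DState.sorted N) := by
  induction h using ReflTransGen.head_induction_on with
  | refl => simp [DState.sorted] at hx
  | @head s s' hss' hs' ih =>
    have hfresh : s.output.length + 1 ∉ s.input :=
      List.disjoint_of_nodup_append (nodup_contents_of_reaches (hs'.head hss'))
        (List.mem_append_right _ hx)
    cases hss' with
    | popLeft o d i z =>
      obtain rfl : z = o.length + 1 := eq_next_of_output_eq_append (s := ⟨o, z :: d, i⟩) hs' rfl
      exact ⟨_, .popLeft o d i _, rfl, hs'⟩
    | popRight o d i z =>
      obtain rfl : z = o.length + 1 := eq_next_of_output_eq_append (s := ⟨o, d ++ [z], i⟩) hs' rfl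
      exact ⟨_, .popRight o d i _, rfl, hs'⟩
    | pushLeft o d i y =>
      simp only at hx ih hfresh ⊢
      have hy : y ≠ o.length + 1 := fun h => hfresh (h ▸ List.mem_cons_self)
      obtain ⟨t', hst', ho', ht'⟩ := ih (List.mem_cons_of_mem _ hx)
      obtain ⟨u, hsu, hou, hut'⟩ := hst'.exists_pop_pushLeft ho' hy
      exact ⟨u, hsu, hou, .head hut' ht'⟩
    | pushRight o d i y =>
      simp only at hx ih hfresh ⊢
      have hy : y ≠ o.length + 1 := fun h => hfresh (h ▸ List.mem_cons_self)
      obtain ⟨t', hst', ho', ht'⟩ := ih (List.mem_append_left _ hx)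
      obtain ⟨u, hsu, hou, hut'⟩ := hst'.exists_pop_pushRight ho' hy
      exact ⟨u, hsu, hou, .head hut' ht'⟩

theorem exists_reducedStep_of_reaches (h : ReflTransGen DequeStep s (DState.sorted N)) :
    s = DState.sorted N ∨ ∃ t, ReducedStep s t ∧ ReflTransGen DequeStep t (DState.sorted N) := by
  by_cases hx : s.output.length + 1 ∈ s.deque
  · obtain ⟨t, hst, ho, ht⟩ := exists_pop_of_next_mem_deque h hx
    exact .inr ⟨t, ⟨hst, fun x _ hx' => hx' ▸ ho⟩, ht⟩
  · refine h.cases_head.imp_right fun ⟨t, hst, ht⟩ => ⟨t, ⟨hst, fun x hend hx' => ?_⟩, ht⟩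
    rcases hend with hend | hend
    · exact absurd (hx' ▸ List.mem_of_mem_head? hend) hx
    · exact absurd (hx' ▸ List.mem_of_mem_getLast? hend) hx

end Sortable

theorem reflTransGen_reducedStep_of_reaches {N : ℕ} {s : DState}
    (h : ReflTransGen DequeStep s (DState.sorted N)) :
    ReflTransGen ReducedStep s (DState.sorted N) := by
  obtain rfl | ⟨t, hst, ht⟩ := exists_reducedStep_of_reaches h
  · exact .refl
  · exact .head hst (reflTransGen_reducedStep_of_reaches ht)
termination_by s.weight
decreasing_by exact hst.1.weight_lt

theorem isReducedRun_of_isChain {r : List DState} (h : r.IsChain ReducedStep) : IsReducedRun r :=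
  fun i hi x hend hx => (List.isChain_iff_getElem.1 h i hi).2 x hend hx

/-- Every deque-sortable permutation can be sorted by a reduced run. -/
theorem dequeSortable_has_reduced_run (l : List ℕ) (hl : DequeSortable l) :
    ∃ r : List DState, List.Chain' DequeStep r ∧
      r.head? = some ⟨[], [], l⟩ ∧
      r.getLast? = some ⟨List.range' 1 l.length, [], []⟩ ∧
      IsReducedRun r := by
  obtain ⟨r, hchain, hlast⟩ :=
    List.exists_isChain_cons_of_relationReflTransGen (reflTransGen_reducedStep_of_reaches hl)
  exact ⟨_, hchain.imp fun _ _ h => h.1, rfl, by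
    rw [List.getLast?_eq_getLast_of_ne_nil (List.cons_ne_nil _ _), hlast]; rfl,
    isReducedRun_of_isChain hchain⟩
end

section
/- A normalized pile of k nonempty twinstacks, where the bottom twinstack contains at least two elements, has exactly 2^k distinct realizations as deque lists; if the bottom twinstack contains exactly one element, it has exactly 2^{k−1} distinct realizations. -/
/-! The top twinstack occupies the two ends of every realization, and its orientation can be
read off the first entry of the deque: in the default orientation that entry lies in the top
left stack, or, when that stack is empty, below the top twinstack and hence above all its
elements; symmetrically for the reversed orientation. So a realization determines the
orientation of every twinstack above the bottom one together with the realization of the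
rest of the pile, and each of these twinstacks doubles the count. The bottom twinstack alone
gives two different lists exactly when it has at least two elements, because a strictly
increasing list of length at least two is not a palindrome. -/

/-- Realize a pile of twinstacks (listed top twinstack first) as a deque list, given an
orientation (`false` = default, `true` = reversed) for each twinstack: starting from the
bottom twinstack and an empty deque, the left-stack elements are appended to the left end
and the right-stack elements to the right end (swapped when reversed). -/
def realizePile (pile : List (List ℕ × List ℕ)) (eps : List Bool) : List ℕ :=
  List.foldr
    (fun tb cur =>
      if tb.2 then tb.1.2 ++ cur ++ tb.1.1.reverse
      else tb.1.1 ++ cur ++ tb.1.2.reverse)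
    [] (pile.zip eps)

def pushTwinstack (t : List ℕ × List ℕ) (e : Bool) (c : List ℕ) : List ℕ :=
  if e then t.2 ++ c ++ t.1.reverse else t.1 ++ c ++ t.2.reverse

def realizations (pile : List (List ℕ × List ℕ)) : Set (List ℕ) :=
  {d | ∃ eps : List Bool, eps.length = pile.length ∧ realizePile pile eps = d}

theorem pushTwinstack_swap (t : List ℕ × List ℕ) (e : Bool) (c : List ℕ) :
    pushTwinstack t.swap e c = pushTwinstack t (!e) c := by
  cases e <;> rfl

theorem List.reverse_ne_self_of_pairwise_lt {α : Type*} [Preorder α] {l : List α}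
    (hl : l.Pairwise (· < ·)) (hlen : 2 ≤ l.length) : l.reverse ≠ l := by
  intro h
  have hgt : l.Pairwise (fun a b => b < a) := List.pairwise_reverse.mp (h.symm ▸ hl)
  obtain ⟨a, b, l, rfl⟩ : ∃ a b l', l = a :: b :: l' := by
    rcases l with _ | ⟨a, _ | ⟨b, l⟩⟩ <;> simp_all
  exact lt_asymm ((List.pairwise_cons.mp hl).1 b (by simp))
    ((List.pairwise_cons.mp hgt).1 b (by simp))

theorem pushTwinstack_false_ne_true {t : List ℕ × List ℕ} {c c' : List ℕ}
    (hnd : (t.1 ++ t.2).Nodup) (ht : t.1 ≠ [] ∨ t.2 ≠ []) (hc : c ≠ []) (hc' : c' ≠ [])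
    (hlt : ∀ x ∈ t.1 ++ t.2, ∀ y ∈ c, x < y) (hlt' : ∀ x ∈ t.1 ++ t.2, ∀ y ∈ c', x < y) :
    pushTwinstack t false c ≠ pushTwinstack t true c' := by
  obtain ⟨L, R⟩ := t
  intro h
  have hhead := congrArg List.head? h
  rcases L with _ | ⟨a, L⟩ <;> rcases R with _ | ⟨b, R⟩
  · simp at ht
  · obtain ⟨y, c, rfl⟩ := List.exists_cons_of_ne_nil hc
    simp [pushTwinstack] at hhead
    exact (hlt b (by simp) y (by simp)).ne' hhead
  · obtain ⟨y, c', rfl⟩ := List.exists_cons_of_ne_nil hc'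
    simp [pushTwinstack] at hhead
    exact (hlt' a (by simp) y (by simp)).ne hhead
  · simp [pushTwinstack] at hhead
    exact List.disjoint_of_nodup_append hnd (a := a) (by simp) (by simp [hhead])

theorem pushTwinstack_eq_pushTwinstack_iff {t : List ℕ × List ℕ} {e e' : Bool} {c c' : List ℕ}
    (hnd : (t.1 ++ t.2).Nodup) (ht : t.1 ≠ [] ∨ t.2 ≠ []) (hc : c ≠ []) (hc' : c' ≠ [])
    (hlt : ∀ x ∈ t.1 ++ t.2, ∀ y ∈ c, x < y) (hlt' : ∀ x ∈ t.1 ++ t.2, ∀ y ∈ c', x < y) :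
    pushTwinstack t e c = pushTwinstack t e' c' ↔ e = e' ∧ c = c' := by
  refine ⟨fun h => ?_, fun ⟨he, hcc⟩ => he ▸ hcc ▸ rfl⟩
  have hmem_swap : ∀ x, x ∈ t.swap.1 ++ t.swap.2 → x ∈ t.1 ++ t.2 :=
    fun x => List.perm_append_comm.mem_iff.mp
  obtain rfl : e = e' := by
    cases e <;> cases e'
    · rfl
    · exact absurd h (pushTwinstack_false_ne_true hnd ht hc hc' hlt hlt')
    · rw [← Bool.not_false, ← pushTwinstack_swap, ← Bool.not_true, ← pushTwinstack_swap] at h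
      exact absurd h (pushTwinstack_false_ne_true (List.nodup_append_comm.mp hnd) ht.symm hc hc'
        (fun x hx => hlt x (hmem_swap x hx)) (fun x hx => hlt' x (hmem_swap x hx)))
    · rfl
  refine ⟨rfl, ?_⟩
  cases e <;> simpa [pushTwinstack] using h

theorem realizations_nil : realizations [] = {[]} := by
  ext d
  constructor
  · rintro ⟨eps, -, rfl⟩
    rfl
  · rintro rfl
    exact ⟨[], rfl, rfl⟩

theorem realizations_cons (t : List ℕ × List ℕ) (P : List (List ℕ × List ℕ)) :
    realizations (t :: P) =
      (fun p : Bool × List ℕ => pushTwinstack t p.1 p.2) '' (Set.univ ×ˢ realizations P) := by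
  ext d
  constructor
  · rintro ⟨_ | ⟨e, es⟩, hlen, rfl⟩
    · simp at hlen
    · exact ⟨(e, realizePile P es), ⟨trivial, es, by simpa using hlen, rfl⟩, rfl⟩
  · rintro ⟨⟨e, _⟩, ⟨-, es, hlen, rfl⟩, rfl⟩
    exact ⟨e :: es, by simp [hlen], rfl⟩

theorem realizations_singleton (t : List ℕ × List ℕ) :
    realizations [t] = {t.1 ++ t.2.reverse, t.2 ++ t.1.reverse} := by
  ext d
  simp only [realizations_cons, realizations_nil, Set.mem_image, Set.mem_prod, Set.mem_univ,
    Set.mem_singleton_iff, true_and, Prod.exists, Bool.exists_bool,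
    pushTwinstack, Set.mem_insert_iff]
  simp [eq_comm]

theorem mem_pushTwinstack {t : List ℕ × List ℕ} {e : Bool} {c : List ℕ} {y : ℕ} :
    y ∈ pushTwinstack t e c ↔ y ∈ t.1 ++ t.2 ∨ y ∈ c := by
  cases e <;> simp only [pushTwinstack, Bool.false_eq_true, if_true, if_false, List.mem_append,
    List.mem_reverse] <;> tauto

theorem ne_nil_of_mem_realizations {P : List (List ℕ × List ℕ)} (hP : P ≠ [])
    (hPne : ∀ s ∈ P, s.1 ≠ [] ∨ s.2 ≠ []) {d : List ℕ} (hd : d ∈ realizations P) : d ≠ [] := by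
  obtain ⟨s, P, rfl⟩ := List.exists_cons_of_ne_nil hP
  rw [realizations_cons] at hd
  obtain ⟨⟨_ | _, c⟩, -, rfl⟩ := hd <;> rcases hPne s (by simp) with h | h <;> simp [pushTwinstack, h]

theorem lt_of_mem_realizations {P : List (List ℕ × List ℕ)} {x : ℕ}
    (hlt : ∀ s ∈ P, ∀ y ∈ s.1 ++ s.2, x < y) {d : List ℕ} (hd : d ∈ realizations P) :
    ∀ y ∈ d, x < y := by
  induction P generalizing d with
  | nil => simp_all [realizations_nil]
  | cons s P ih =>
    rw [realizations_cons] at hd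
    obtain ⟨⟨e, c⟩, ⟨-, hc⟩, rfl⟩ := hd
    have hs : ∀ y ∈ s.1 ++ s.2, x < y := hlt s (by simp)
    have hc : ∀ y ∈ c, x < y := ih (fun s' hs' => hlt s' (by simp [hs'])) hc
    intro y hy
    rcases mem_pushTwinstack.mp hy with hy | hy
    exacts [hs y hy, hc y hy]

theorem ncard_realizations_cons {t : List ℕ × List ℕ} {P : List (List ℕ × List ℕ)} (hP : P ≠ [])
    (hnd : (t.1 ++ t.2).Nodup) (ht : t.1 ≠ [] ∨ t.2 ≠ [])
    (hPne : ∀ s ∈ P, s.1 ≠ [] ∨ s.2 ≠ [])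
    (hlt : ∀ s ∈ P, ∀ x ∈ t.1 ++ t.2, ∀ y ∈ s.1 ++ s.2, x < y) :
    (realizations (t :: P)).ncard = 2 * (realizations P).ncard := by
  have hinj : Set.InjOn (fun p : Bool × List ℕ => pushTwinstack t p.1 p.2)
      (Set.univ ×ˢ realizations P) := by
    rintro ⟨e, c⟩ ⟨-, hc⟩ ⟨e', c'⟩ ⟨-, hc'⟩ h
    have hlt_of_mem : ∀ {d}, d ∈ realizations P → ∀ x ∈ t.1 ++ t.2, ∀ y ∈ d, x < y :=
      fun hd x hx => lt_of_mem_realizations (fun s hs => hlt s hs x hx) hd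
    obtain ⟨rfl, rfl⟩ := (pushTwinstack_eq_pushTwinstack_iff hnd ht
      (ne_nil_of_mem_realizations hP hPne hc) (ne_nil_of_mem_realizations hP hPne hc')
      (hlt_of_mem hc) (hlt_of_mem hc')).mp h
    rfl
  rw [realizations_cons, hinj.ncard_image, Set.ncard_prod, Set.ncard_univ, Nat.card_eq_fintype_card,
    Fintype.card_bool]

theorem ncard_realizations_eq_pow_mul (pile : List (List ℕ × List ℕ)) (hne : pile ≠ [])
    (hnd : ∀ t ∈ pile, (t.1 ++ t.2).Nodup) (hnonempty : ∀ t ∈ pile, t.1 ≠ [] ∨ t.2 ≠ [])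
    (hnormal : pile.Pairwise fun s t => ∀ x ∈ s.1 ++ s.2, ∀ y ∈ t.1 ++ t.2, x < y) :
    (realizations pile).ncard =
      2 ^ (pile.length - 1) * (realizations [pile.getLast hne]).ncard := by
  induction pile with
  | nil => exact absurd rfl hne
  | cons t P ih =>
    rcases eq_or_ne P [] with rfl | hP
    · simp
    have hPlen : 1 ≤ P.length := List.length_pos_iff.mpr hP
    rw [List.pairwise_cons] at hnormal
    rw [ncard_realizations_cons hP (hnd t (by simp)) (hnonempty t (by simp))
        (fun s hs => hnonempty s (by simp [hs])) hnormal.1,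
      ih hP (fun s hs => hnd s (by simp [hs])) (fun s hs => hnonempty s (by simp [hs])) hnormal.2,
      List.getLast_cons hP, ← mul_assoc, ← pow_succ', List.length_cons, Nat.sub_add_cancel hPlen,
      Nat.add_sub_cancel]

theorem ncard_realizations_singleton_of_two_le {t : List ℕ × List ℕ}
    (h1 : t.1.Pairwise (· < ·)) (h2 : t.2.Pairwise (· < ·)) (hnd : (t.1 ++ t.2).Nodup)
    (hlen : 2 ≤ t.1.length + t.2.length) : (realizations [t]).ncard = 2 := by
  rw [realizations_singleton]
  refine Set.ncard_pair fun h => ?_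
  obtain ⟨L, R⟩ := t
  rcases L with _ | ⟨a, L⟩ <;> rcases R with _ | ⟨b, R⟩
  · simp at hlen
  · exact List.reverse_ne_self_of_pairwise_lt h2 (by simpa using hlen) (by simpa using h)
  · exact List.reverse_ne_self_of_pairwise_lt h1 (by simpa using hlen) (by simpa using h.symm)
  · have hab : a = b := List.head_eq_of_cons_eq (by simpa using h)
    exact List.disjoint_of_nodup_append hnd (a := a) (by simp) (by simp [hab])

theorem ncard_realizations_singleton_of_eq_one {t : List ℕ × List ℕ}
    (hlen : t.1.length + t.2.length = 1) : (realizations [t]).ncard = 1 := by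
  obtain ⟨L, R⟩ := t
  rw [realizations_singleton]
  rcases L with _ | ⟨a, _ | _⟩ <;> rcases R with _ | ⟨b, _ | _⟩ <;> simp_all
  omega

/-- A normalized pile of `k` nonempty twinstacks has exactly `2^k` realizations when the
bottom twinstack has at least two elements, and exactly `2^(k-1)` realizations when the
bottom twinstack has exactly one element. -/
theorem card_realizations (pile : List (List ℕ × List ℕ)) (hne : pile ≠ [])
    (htw : ∀ t ∈ pile, List.Pairwise (· < ·) t.1 ∧ List.Pairwise (· < ·) t.2 ∧
      (t.1 ++ t.2).Nodup ∧ (∀ x ∈ t.1 ++ t.2, 0 < x) ∧ (t.1 ≠ [] ∨ t.2 ≠ []))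
    (hnormal : ∀ (i j : ℕ) (hij : i < j) (hj : j < pile.length),
      ∀ x ∈ (pile.get ⟨i, by omega⟩).1 ++ (pile.get ⟨i, by omega⟩).2,
      ∀ y ∈ (pile.get ⟨j, hj⟩).1 ++ (pile.get ⟨j, hj⟩).2, x < y) :
    (2 ≤ (pile.getLast hne).1.length + (pile.getLast hne).2.length →
      {d : List ℕ | ∃ eps : List Bool, eps.length = pile.length ∧
        realizePile pile eps = d}.ncard = 2 ^ pile.length) ∧
    ((pile.getLast hne).1.length + (pile.getLast hne).2.length = 1 →
      {d : List ℕ | ∃ eps : List Bool, eps.length = pile.length ∧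
        realizePile pile eps = d}.ncard = 2 ^ (pile.length - 1)) := by
  change (_ → (realizations pile).ncard = _) ∧ (_ → (realizations pile).ncard = _)
  have hcard := ncard_realizations_eq_pow_mul pile hne (fun t ht => (htw t ht).2.2.1)
    (fun t ht => (htw t ht).2.2.2.2)
    (List.pairwise_iff_get.mpr fun i j hij => hnormal i j hij j.2)
  obtain ⟨hsorted₁, hsorted₂, hnd, -, -⟩ := htw _ (List.getLast_mem hne)
  have hlen : 1 ≤ pile.length := List.length_pos_iff.mpr hne
  refine ⟨fun h2 => ?_, fun h1 => ?_⟩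
  · rw [hcard, ncard_realizations_singleton_of_two_le hsorted₁ hsorted₂ hnd h2, ← pow_succ,
      Nat.sub_add_cancel hlen]
  · rw [hcard, ncard_realizations_singleton_of_eq_one h1, mul_one]
end

section
/- If all elements larger than i have already left the input, the deque state has end elements i and j with i < j and is not a sandwich state, then the permutation is sortable from this state if and only if the remaining input, reduced to a permutation, is sortable on two parallel stacks. -/
/-- State of a two-parallel-stack switchyard. -/
structure PState where
  output : List ℕ
  stack1 : List ℕ
  stack2 : List ℕ
  input : List ℕ

/-- One step of sorting on two parallel stacks: push the next input element onto
either stack, or pop the top of either stack to the output. -/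
inductive ParStep : PState → PState → Prop
  | push1 (o s t i : List ℕ) (x : ℕ) : ParStep ⟨o, s, t, x :: i⟩ ⟨o, x :: s, t, i⟩
  | push2 (o s t i : List ℕ) (x : ℕ) : ParStep ⟨o, s, t, x :: i⟩ ⟨o, s, x :: t, i⟩
  | pop1 (o s t i : List ℕ) (x : ℕ) : ParStep ⟨o, x :: s, t, i⟩ ⟨o ++ [x], s, t, i⟩
  | pop2 (o s t i : List ℕ) (x : ℕ) : ParStep ⟨o, s, x :: t, i⟩ ⟨o ++ [x], s, t, i⟩

/-- A permutation (as a list) is sortable on two parallel stacks. -/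
def TwoStackSortable (l : List ℕ) : Prop :=
  Relation.ReflTransGen ParStep ⟨[], [], [], l⟩ ⟨List.range' 1 l.length, [], [], []⟩

/-- A deque list is a sandwich if some element lies between two larger elements. -/
def Sandwich (d : List ℕ) : Prop :=
  ∃ (u v w t : List ℕ) (j i k : ℕ),
    d = u ++ j :: v ++ i :: w ++ k :: t ∧ i < j ∧ i < k

/-- Reduce a list of distinct naturals to a permutation pattern on `{1,…,len}`,
replacing each entry by its rank. -/
def reduceList (l : List ℕ) : List ℕ :=
  l.map (fun x => l.countP (fun y => y < x) + 1)

/-!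
Since `d` is not a sandwich and has ends `i < j`, every element of `d` is at least `i`, so the
remaining input consists of the values just above the output `1, …, m`, and `d` of the values
above those. While the input is being sorted the deque has the shape `s ++ d ++ reverse t`, and
popping an element of `d` before the input is exhausted ends the run in failure; so the deque
moves are exactly the moves of two parallel stacks `s` and `t`. Once the input is sorted, the
remaining non-sandwich block of consecutive values can always be emptied in order, because its
minimum sits at one of its ends.
-/

open List Relation

lemma List.eq_range'_of_prefix {l : List ℕ} {s n : ℕ} (h : l <+: range' s n) :
    l = range' s l.length := by
  have hl := prefix_iff_eq_take.mp h
  rwa [take_range'_of_length_ge (by simpa using h.length_le)] at hl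

lemma map_add_range'_right (s L m : ℕ) : (range' s L).map (· + m) = range' (s + m) L := by
  simp_rw [add_comm _ m, map_add_range']

lemma map_sub_map_add_cancel {l : List ℕ} {m : ℕ} (hl : ∀ x ∈ l, m ≤ x) :
    (l.map (· - m)).map (· + m) = l := by
  rw [List.map_map]
  conv_rhs => rw [← map_id l]
  exact map_congr_left fun x hx => Nat.sub_add_cancel (hl x hx)

lemma countP_lt_range' (s L x : ℕ) : (range' s L).countP (· < x) = min L (x - s) := by
  induction L generalizing s with
  | zero => simp
  | succ L ih => rw [range'_succ, countP_cons, ih]; split_ifs <;> simp_all <;> omega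

lemma perm_range'_of_append_perm {l₁ l₂ : List ℕ} {s N : ℕ} (h : l₁ ++ l₂ ~ range' s N)
    (hlt : ∀ x ∈ l₁, ∀ y ∈ l₂, x < y) :
    l₁ ~ range' s l₁.length ∧ l₂ ~ range' (s + l₁.length) l₂.length := by
  -- sorting both blocks yields a sorted permutation of `range' s N`, hence `range' s N` itself
  let sort := insertionSort (· ≤ · : ℕ → ℕ → Prop)
  have hsorted : (sort l₁ ++ sort l₂).Pairwise (· ≤ ·) :=
    pairwise_append.mpr ⟨pairwise_insertionSort _ _, pairwise_insertionSort _ _,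
      fun x hx y hy => (hlt x ((mem_insertionSort _).mp hx) y ((mem_insertionSort _).mp hy)).le⟩
  have hN : N = l₁.length + l₂.length := by simpa using h.length_eq.symm
  have hperm : sort l₁ ++ sort l₂ ~ range' s (l₁.length + l₂.length) :=
    hN ▸ ((perm_insertionSort _ _).append (perm_insertionSort _ _)).trans h
  have heq := hperm.eq_of_pairwise' hsorted pairwise_le_range'
  rw [← range'_append_1] at heq
  obtain ⟨h₁, h₂⟩ := append_inj heq (by simp [sort, length_insertionSort])
  exact ⟨h₁ ▸ (perm_insertionSort _ _).symm, h₂ ▸ (perm_insertionSort _ _).symm⟩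

lemma sandwich_of_lt_ends {a b x : ℕ} (u w : List ℕ) (ha : x < a) (hb : x < b) :
    Sandwich (a :: (u ++ x :: w) ++ [b]) :=
  ⟨[], u, w, [], a, x, b, by simp, ha, hb⟩

lemma Sandwich.cons {d : List ℕ} (a : ℕ) (h : Sandwich d) : Sandwich (a :: d) := by
  obtain ⟨u, v, w, t, j, i, k, rfl, hij, hik⟩ := h
  exact ⟨a :: u, v, w, t, j, i, k, rfl, hij, hik⟩

lemma Sandwich.append_singleton {d : List ℕ} (a : ℕ) (h : Sandwich d) :
    Sandwich (d ++ [a]) := by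
  obtain ⟨u, v, w, t, j, i, k, rfl, hij, hik⟩ := h
  exact ⟨u, v, w, t ++ [a], j, i, k, by simp, hij, hik⟩

lemma min_le_of_not_sandwich {d : List ℕ} {a b x : ℕ} (hd : ¬ Sandwich d)
    (ha : d.head? = some a) (hb : d.getLast? = some b) (hx : x ∈ d) : min a b ≤ x := by
  rcases d with _ | ⟨a', d⟩
  · simp at hx
  obtain rfl : a' = a := by simpa using ha
  rcases d.eq_nil_or_concat with rfl | ⟨mid, b', rfl⟩
  · simp_all
  rw [concat_eq_append] at hb hd hx
  obtain rfl : b' = b := by rwa [← cons_append, getLast?_concat, Option.some_inj] at hb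
  simp only [mem_cons, mem_append, not_mem_nil, or_false] at hx
  rcases hx with rfl | hx | rfl
  · exact min_le_left _ _
  · obtain ⟨u, w, rfl⟩ := append_of_mem hx
    by_contra! hlt
    exact hd (sandwich_of_lt_ends u w (lt_of_lt_of_le hlt (min_le_left _ _))
      (lt_of_lt_of_le hlt (min_le_right _ _)))
  · exact min_le_right _ _

lemma le_of_mem_of_not_sandwich {d : List ℕ} {i j : ℕ} (hd : ¬ Sandwich d) (hij : i ≤ j)
    (hends : (d.head? = some i ∧ d.getLast? = some j) ∨
      (d.head? = some j ∧ d.getLast? = some i))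
    {x : ℕ} (hx : x ∈ d) : i ≤ x := by
  rcases hends with ⟨ha, hb⟩ | ⟨ha, hb⟩ <;>
    simpa [hij] using min_le_of_not_sandwich hd ha hb hx

lemma exists_eq_cons_or_eq_append_of_not_sandwich {d : List ℕ} {x : ℕ} (hd : ¬ Sandwich d)
    (hnd : d.Nodup) (hx : x ∈ d) (hmin : ∀ y ∈ d, x ≤ y) :
    (∃ d', d = x :: d') ∨ ∃ d', d = d' ++ [x] := by
  obtain ⟨u, v, rfl⟩ := append_of_mem hx
  rcases u with _ | ⟨a, u⟩
  · exact .inl ⟨v, rfl⟩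
  rcases v.eq_nil_or_concat with rfl | ⟨w, b, rfl⟩
  · exact .inr ⟨a :: u, rfl⟩
  have hxa : x ≠ a := by rintro rfl; simp_all [nodup_middle]
  have hxb : x ≠ b := by rintro rfl; simp_all [nodup_middle]
  exact absurd (sandwich_of_lt_ends u w ((hmin a (by simp)).lt_of_ne hxa)
    ((hmin b (by simp)).lt_of_ne hxb)) (by simpa using hd)

lemma DequeStep.output_prefix {a b : DState} (h : DequeStep a b) : a.output <+: b.output := by
  cases h <;> simp

lemma DequeStep.output_prefix_of_reflTransGen {a b : DState} (h : ReflTransGen DequeStep a b) :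
    a.output <+: b.output := by
  induction h with
  | refl => exact prefix_refl _
  | tail _ hstep ih => exact ih.trans hstep.output_prefix

lemma DequeStep.reflTransGen_empty_of_not_sandwich {len a : ℕ} {d : List ℕ} (O : List ℕ)
    (hd : ¬ Sandwich d) (hp : d ~ range' a len) :
    ReflTransGen DequeStep ⟨O, d, []⟩ ⟨O ++ range' a len, [], []⟩ := by
  induction len generalizing a d O with
  | zero =>
    obtain rfl : d = [] := by simpa using hp
    simpa using ReflTransGen.refl
  | succ len ih =>
    have hmin : ∀ y ∈ d, a ≤ y := fun y hy => (mem_range'_1.mp (hp.subset hy)).1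
    have hnd : d.Nodup := hp.nodup_iff.mpr nodup_range'
    rw [range'_succ] at hp ⊢
    rcases exists_eq_cons_or_eq_append_of_not_sandwich hd hnd (hp.symm.subset mem_cons_self) hmin
      with ⟨d', rfl⟩ | ⟨d', rfl⟩
    · refine .head (DequeStep.popLeft O d' [] a) ?_
      simpa using ih (O ++ [a]) (fun h => hd (h.cons a)) (perm_cons a |>.mp hp)
    · refine .head (DequeStep.popRight O d' [] a) ?_
      simpa using ih (O ++ [a]) (fun h => hd (h.append_singleton a))
        (perm_cons a |>.mp (perm_append_singleton a d' |>.symm.trans hp))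

/-- The deque `s ++ D ++ reverse t` that simulates the parallel stacks `s` and `t` of `p` around
a fixed block `D`, with values relabelled by `f` and the output continuing the prefix `O`. -/
def PState.toDState (O D : List ℕ) (f : ℕ → ℕ) (p : PState) : DState :=
  ⟨O ++ p.output.map f, p.stack1.map f ++ D ++ (p.stack2.map f).reverse, p.input.map f⟩

lemma ParStep.toDState {p q : PState} (O D : List ℕ) (f : ℕ → ℕ) (h : ParStep p q) :
    DequeStep (p.toDState O D f) (q.toDState O D f) := by
  cases h with
  | push1 o s t i x =>
    simpa [PState.toDState] using DequeStep.pushLeft _ (s.map f ++ D ++ (t.map f).reverse) _ (f x)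
  | push2 o s t i x =>
    simpa [PState.toDState] using DequeStep.pushRight _ (s.map f ++ D ++ (t.map f).reverse) _ (f x)
  | pop1 o s t i x =>
    simpa [PState.toDState] using
      DequeStep.popLeft (O ++ o.map f) (s.map f ++ D ++ (t.map f).reverse) _ (f x)
  | pop2 o s t i x =>
    simpa [PState.toDState] using
      DequeStep.popRight (O ++ o.map f) (s.map f ++ D ++ (t.map f).reverse) _ (f x)

lemma ParStep.reflTransGen_toDState {p q : PState} (O D : List ℕ) (f : ℕ → ℕ)
    (h : ReflTransGen ParStep p q) :
    ReflTransGen DequeStep (p.toDState O D f) (q.toDState O D f) :=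
  ReflTransGen.lift (PState.toDState O D f) (fun _ _ => ParStep.toDState O D f) _ _ h

lemma DequeStep.of_toDState {p : PState} {b : DState} {O D : List ℕ} {f : ℕ → ℕ}
    (hD : D ≠ []) (h : DequeStep (p.toDState O D f) b) :
    (∃ q, ParStep p q ∧ b = q.toDState O D f) ∨
      ∃ x ∈ D, b.output = O ++ p.output.map f ++ [x] := by
  obtain ⟨o, s, t, ii⟩ := p
  generalize hs : PState.toDState O D f ⟨o, s, t, ii⟩ = a at h
  simp only [PState.toDState] at hs
  cases h with
  | pushLeft o' d' i' x =>
    obtain ⟨rfl, rfl, hi⟩ := DState.mk.inj hs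
    obtain ⟨y, ii, rfl, rfl, rfl⟩ := map_eq_cons_iff.mp hi
    exact .inl ⟨_, .push1 o s t ii y, by simp [PState.toDState]⟩
  | pushRight o' d' i' x =>
    obtain ⟨rfl, rfl, hi⟩ := DState.mk.inj hs
    obtain ⟨y, ii, rfl, rfl, rfl⟩ := map_eq_cons_iff.mp hi
    exact .inl ⟨_, .push2 o s t ii y, by simp [PState.toDState]⟩
  | popLeft o' d' i' x =>
    obtain ⟨rfl, hd, rfl⟩ := DState.mk.inj hs
    rcases s with _ | ⟨y, s⟩
    · obtain ⟨y, D', rfl⟩ := exists_cons_of_ne_nil hD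
      obtain ⟨rfl, -⟩ : y = x ∧ _ := by simpa using hd
      exact .inr ⟨y, mem_cons_self, rfl⟩
    · obtain ⟨rfl, rfl⟩ : f y = x ∧ _ = d' := by simpa using hd
      exact .inl ⟨_, .pop1 o s t ii y, by simp [PState.toDState]⟩
  | popRight o' d' i' x =>
    obtain ⟨rfl, hd, rfl⟩ := DState.mk.inj hs
    rcases t with _ | ⟨y, t⟩
    · rcases D.eq_nil_or_concat with rfl | ⟨D', y, rfl⟩
      · exact absurd rfl hD
      obtain ⟨-, hx⟩ :=
        append_inj' (s₁ := map f s ++ D') (t₁ := [y]) (t₂ := [x]) (by simpa using hd) rfl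
      exact .inr ⟨x, by simp_all, rfl⟩
    · obtain ⟨rfl, hx⟩ := append_inj' (s₁ := map f s ++ D ++ (map f t).reverse)
        (t₁ := [f y]) (t₂ := [x]) (by simpa using hd) rfl
      obtain rfl : f y = x := by simpa using hx
      exact .inl ⟨_, .pop2 o s t ii y, by simp [PState.toDState]⟩

def PState.length (p : PState) : ℕ :=
  p.output.length + p.stack1.length + p.stack2.length + p.input.length

lemma ParStep.length_eq {p q : PState} (h : ParStep p q) : q.length = p.length := by
  cases h <;> simp [PState.length] <;> omega

lemma PState.eq_sorted_of_prefix {m k n x : ℕ} {p : PState} (hp : p.length = k) (hx : m + k < x)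
    (h : range' 1 m ++ p.output.map (· + m) ++ [x] <+: range' 1 n) :
    p = ⟨range' 1 k, [], [], []⟩ := by
  obtain ⟨o, s, t, ii⟩ := p
  have hrange : range' 1 m ++ (o.map (· + m) ++ [x]) =
      range' 1 m ++ (range' (1 + m) o.length ++ [1 + (m + o.length)]) := by
    rw [← append_assoc, eq_range'_of_prefix h, ← append_assoc, range'_append_1,
      ← range'_1_concat]
    simp [add_assoc]
  obtain ⟨ho, hx'⟩ := append_inj' (append_cancel_left hrange) rfl
  simp only [PState.length] at hp
  simp only [cons.injEq, and_true] at hx'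
  obtain rfl : o.length = k := by omega
  obtain ⟨rfl, rfl, rfl⟩ : s = [] ∧ t = [] ∧ ii = [] := by
    simp only [← length_eq_zero_iff]; omega
  rw [← map_add_range'_right] at ho
  exact congrArg (PState.mk · [] [] []) (map_injective_iff.mpr (add_left_injective m) ho)

lemma ParStep.reflTransGen_of_toDState {m k n : ℕ} {D : List ℕ} (hD : D ≠ [])
    (hDk : ∀ x ∈ D, m + k < x) {p : PState} (hp : p.length = k)
    (h : ReflTransGen DequeStep (p.toDState (range' 1 m) D (· + m)) ⟨range' 1 n, [], []⟩) :
    ReflTransGen ParStep p ⟨range' 1 k, [], [], []⟩ := by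
  generalize hs : p.toDState (range' 1 m) D (· + m) = s at h
  induction h using ReflTransGen.head_induction_on generalizing p with
  | refl => simp [PState.toDState, hD] at hs
  | head hstep hrest ih =>
    subst hs
    rcases hstep.of_toDState hD with ⟨q, hpq, rfl⟩ | ⟨x, hx, hout⟩
    · exact .head hpq (ih (hpq.length_eq.trans hp) rfl)
    -- popping from `D` is only possible once the two-stack run has output `1, …, k`
    · rw [PState.eq_sorted_of_prefix hp (hDk x hx)
        (hout ▸ DequeStep.output_prefix_of_reflTransGen hrest)]

lemma DequeStep.reflTransGen_of_parStep {m k L : ℕ} {D : List ℕ} (hD : ¬ Sandwich D)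
    (hDperm : D ~ range' (m + 1 + k) L) {p : PState}
    (h : ReflTransGen ParStep p ⟨range' 1 k, [], [], []⟩) :
    ReflTransGen DequeStep (p.toDState (range' 1 m) D (· + m))
      ⟨range' 1 (m + k + L), [], []⟩ := by
  have hsorted : range' 1 m ++ (range' 1 k).map (· + m) ++ range' (m + 1 + k) L =
      range' 1 (m + k + L) := by
    rw [map_add_range'_right, range'_append_1, show m + 1 + k = 1 + (m + k) by omega,
      range'_append_1]
  refine (ParStep.reflTransGen_toDState _ D _ h).trans ?_
  simpa [PState.toDState, hsorted] using
    DequeStep.reflTransGen_empty_of_not_sandwich (range' 1 m ++ (range' 1 k).map (· + m)) hD hDperm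

lemma reduceList_eq_map_sub {l : List ℕ} {m k : ℕ} (hl : l ~ range' (m + 1) k) :
    reduceList l = l.map (· - m) := by
  refine map_congr_left fun x hx => ?_
  have := mem_range'_1.mp (hl.subset hx)
  rw [hl.countP_eq, countP_lt_range']
  omega

lemma perm_range'_input_and_deque {out d inp : List ℕ} {n i : ℕ}
    (hperm : out ++ d ++ inp ~ range' 1 n) (hout : out = range' 1 out.length)
    (hinp : ∀ x ∈ inp, x < i) (hd : ∀ x ∈ d, i ≤ x) :
    inp ~ range' (out.length + 1) inp.length ∧
      d ~ range' (out.length + 1 + inp.length) d.length := by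
  have hn : n = out.length + (inp.length + d.length) := by
    have := hperm.length_eq; simp at this; omega
  rw [hn, ← range'_append_1, ← hout, append_assoc, Nat.add_comm 1] at hperm
  exact perm_range'_of_append_perm (perm_append_comm.trans (perm_append_left_iff _ |>.mp hperm))
    fun x hx y hy => (hinp x hx).trans_le (hd y hy)

/-- Suppose, in a deque state, the output is the initial segment `1,…,m`, the deque has
end elements `i` and `j` with `i < j`, all elements larger than `i` have already left the
input (every remaining input element is smaller than `i`), and the state is not a
sandwich state. Then the permutation is sortable from this state iff the remaining input,
reduced to a permutation, is sortable on two parallel stacks. -/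
theorem deque_tail_iff_twoStack (n : ℕ) (out d inp : List ℕ) (i j : ℕ)
    (hperm : (out ++ d ++ inp).Perm (List.range' 1 n))
    (hout : out = List.range' 1 out.length)
    (hij : i < j)
    (hends : (d.head? = some i ∧ d.getLast? = some j) ∨
      (d.head? = some j ∧ d.getLast? = some i))
    (hinp : ∀ x ∈ inp, x < i)
    (hnsand : ¬ Sandwich d) :
    Relation.ReflTransGen DequeStep ⟨out, d, inp⟩ ⟨List.range' 1 n, [], []⟩ ↔
      TwoStackSortable (reduceList inp) := by
  set m := out.length
  have hd_ne : d ≠ [] := by rintro rfl; simp at hends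
  have hd_ge : ∀ x ∈ d, i ≤ x := fun _ => le_of_mem_of_not_sandwich hnsand hij.le hends
  have hn : n = m + inp.length + d.length := by have := hperm.length_eq; simp at this; omega
  obtain ⟨hinp_perm, hd_perm⟩ := perm_range'_input_and_deque hperm hout hinp hd_ge
  have hr : reduceList inp = inp.map (· - m) := reduceList_eq_map_sub hinp_perm
  have hstart :
      PState.toDState out d (· + m) ⟨[], [], [], inp.map (· - m)⟩ = ⟨out, d, inp⟩ := by
    have hm : ∀ x ∈ inp, m ≤ x := fun x hx =>
      Nat.le_of_succ_le (mem_range'_1.mp (hinp_perm.subset hx)).1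
    simp only [PState.toDState, map_nil, append_nil, nil_append, reverse_nil,
      map_sub_map_add_cancel hm]
  unfold TwoStackSortable
  rw [hr, length_map, ← hstart, hout, hn]
  refine ⟨ParStep.reflTransGen_of_toDState hd_ne (fun x hx => ?_) (by simp [PState.length]),
    DequeStep.reflTransGen_of_parStep hnsand hd_perm⟩
  have := mem_range'_1.mp (hd_perm.subset hx)
  omega
end
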